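/- arXiv:1709.02012 — 8 statements merged into one kernel-verified Lean document; each statement's English description precedes it below -/
import Mathlib

section
/- For a perfectly calibrated classifier h on group G with base rate μ ∈ (0,1), the generalized false-positive rate satisfies FP(h) = (E[h(x)] − E[h(x)²])/(1−μ), where FP(h) = E_G[h(x) | y=0]. -/
open Finset Set

/-- Probability of an event `S` under weights `w` on a finite sample space. -/
noncomputable def Pr {Ω : Type*} [Fintype Ω] (w : Ω → ℝ) (S : Set Ω) : ℝ :=
  ∑ ω, S.indicator w ω

/-- Expectation of `f` under weights `w`. -/
noncomputable def Ex {Ω : Type*} [Fintype Ω] (w : Ω → ℝ) (f : Ω → ℝ) : ℝ :=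
  ∑ ω, w ω * f ω

/-- Conditional expectation of `f` given event `S`. -/
noncomputable def condEx {Ω : Type*} [Fintype Ω] (w : Ω → ℝ) (f : Ω → ℝ) (S : Set Ω) : ℝ :=
  (∑ ω, S.indicator (fun ω' => w ω' * f ω') ω) / Pr w S

/-- `w` is a probability distribution. -/
def IsDistrib {Ω : Type*} [Fintype Ω] (w : Ω → ℝ) : Prop :=
  (∀ ω, 0 ≤ w ω) ∧ ∑ ω, w ω = 1

/-- Generalized false-positive rate `E[h(x) | y = 0]`. -/
noncomputable def FP {Ω : Type*} [Fintype Ω] (w : Ω → ℝ) (y : Ω → Bool) (h : Ω → ℝ) : ℝ :=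
  condEx w h {ω | y ω = false}

/-- Generalized false-negative rate `E[1 - h(x) | y = 1]`. -/
noncomputable def FN {Ω : Type*} [Fintype Ω] (w : Ω → ℝ) (y : Ω → Bool) (h : Ω → ℝ) : ℝ :=
  condEx w (fun ω => 1 - h ω) {ω | y ω = true}

/-- `h` is perfectly calibrated: for every value `p` of `h`,
`P[y = 1 ∧ h = p] = p · P[h = p]`, i.e. `P[y = 1 | h = p] = p` on the support of `h`. -/
def Calibrated {Ω : Type*} [Fintype Ω] (w : Ω → ℝ) (y : Ω → Bool) (h : Ω → ℝ) : Prop :=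
  ∀ p : ℝ, Pr w {ω | h ω = p ∧ y ω = true} = p * Pr w {ω | h ω = p}

/-- Calibration gap `∑_p |P[y=1 | h=p] - p| · P[h=p]`. -/
noncomputable def calibGap {Ω : Type*} [Fintype Ω] (w : Ω → ℝ) (y : Ω → Bool) (h : Ω → ℝ) : ℝ :=
  ∑ p ∈ Finset.image h Finset.univ,
    |Pr w {ω | h ω = p ∧ y ω = true} - p * Pr w {ω | h ω = p}|

/-- generalized false-positive rate of a calibrated classifier. -/
theorem fp_of_calibrated {Ω : Type*} [Fintype Ω]
    (w : Ω → ℝ) (y : Ω → Bool) (h : Ω → ℝ) (μ : ℝ)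
    (hw : IsDistrib w) (hh : ∀ ω, 0 ≤ h ω ∧ h ω ≤ 1)
    (hμ : μ = Pr w {ω | y ω = true}) (hμ0 : 0 < μ) (hμ1 : μ < 1)
    (hcal : Calibrated w y h) :
    FP w y h = (Ex w h - Ex w (fun ω => h ω ^ 2)) / (1 - μ) := by

  classical
  obtain ⟨hw0, hw1⟩ := hw
  have hPr : ∀ (P : Ω → Prop) [DecidablePred P],
      Pr w {ω | P ω} = ∑ ω ∈ Finset.univ.filter P, w ω := by
    intro P _
    unfold Pr
    rw [Finset.sum_filter]
    exact Finset.sum_congr rfl (fun ω _ => by simp [Set.indicator_apply])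
  have hsplit : Pr w {ω | y ω = false} + Pr w {ω | y ω = true} = 1 := by
    unfold Pr
    rw [← Finset.sum_add_distrib, ← hw1]
    refine Finset.sum_congr rfl (fun ω _ => ?_)
    cases hy : y ω <;> simp [Set.indicator_apply, hy]
  have htrue : (∑ ω, ({ω | y ω = true}).indicator (fun ω' => w ω' * h ω') ω)
      = Ex w (fun ω => h ω ^ 2) := by
    have lhs_fib : (∑ ω, ({ω | y ω = true}).indicator (fun ω' => w ω' * h ω') ω)
        = ∑ p ∈ Finset.image h Finset.univ, ∑ ω ∈ Finset.univ.filter (fun ω => h ω = p),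
            ({ω | y ω = true}).indicator (fun ω' => w ω' * h ω') ω := by
      rw [Finset.sum_fiberwise_of_maps_to]
      intro ω _; exact Finset.mem_image_of_mem h (Finset.mem_univ ω)
    have rhs_fib : Ex w (fun ω => h ω ^ 2)
        = ∑ p ∈ Finset.image h Finset.univ, ∑ ω ∈ Finset.univ.filter (fun ω => h ω = p),
            w ω * h ω ^ 2 := by
      unfold Ex
      rw [Finset.sum_fiberwise_of_maps_to]
      intro ω _; exact Finset.mem_image_of_mem h (Finset.mem_univ ω)
    rw [lhs_fib, rhs_fib]
    refine Finset.sum_congr rfl (fun p _ => ?_)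
    have h1 : ∑ ω ∈ Finset.univ.filter (fun ω => h ω = p),
        ({ω | y ω = true}).indicator (fun ω' => w ω' * h ω') ω
        = p * Pr w {ω | h ω = p ∧ y ω = true} := by
      have e1 : ∑ ω ∈ Finset.univ.filter (fun ω => h ω = p),
          ({ω | y ω = true}).indicator (fun ω' => w ω' * h ω') ω
          = ∑ ω ∈ (Finset.univ.filter (fun ω => h ω = p)).filter (fun ω => y ω = true),
              w ω * h ω := by
        rw [Finset.sum_filter (fun ω => y ω = true) (fun ω => w ω * h ω)]
        exact Finset.sum_congr rfl (fun ω _ => by simp [Set.indicator_apply])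
      rw [e1, Finset.filter_filter, hPr (fun ω => h ω = p ∧ y ω = true), Finset.mul_sum]
      refine Finset.sum_congr rfl (fun ω hω => ?_)
      simp only [Finset.mem_filter] at hω
      rw [hω.2.1]; ring
    have h2 : ∑ ω ∈ Finset.univ.filter (fun ω => h ω = p), w ω * h ω ^ 2
        = p ^ 2 * Pr w {ω | h ω = p} := by
      rw [hPr (fun ω => h ω = p), Finset.mul_sum]
      refine Finset.sum_congr rfl (fun ω hω => ?_)
      simp only [Finset.mem_filter] at hω
      rw [hω.2]; ring
    rw [h1, h2, hcal p]; ring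
  have hfalse : (∑ ω, ({ω | y ω = false}).indicator (fun ω' => w ω' * h ω') ω)
      = Ex w h - Ex w (fun ω => h ω ^ 2) := by
    have hsum : (∑ ω, ({ω | y ω = false}).indicator (fun ω' => w ω' * h ω') ω)
        + (∑ ω, ({ω | y ω = true}).indicator (fun ω' => w ω' * h ω') ω) = Ex w h := by
      unfold Ex
      rw [← Finset.sum_add_distrib]
      refine Finset.sum_congr rfl (fun ω _ => ?_)
      cases hy : y ω <;> simp [Set.indicator_apply, hy]
    rw [htrue] at hsum; linarith
  unfold FP condEx
  rw [hfalse]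
  have : Pr w {ω | y ω = false} = 1 - μ := by rw [hμ] at *; linarith
  rw [this]
end

section
/- For a perfectly calibrated classifier h on group G with base rate μ ∈ (0,1), the generalized false-negative rate satisfies FN(h) = (E[h(x)] − E[h(x)²])/μ, where FN(h) = E_G[1 − h(x) | y=1]. -/
open Finset Set

/-!
Grouping the sample space by the level sets `{h = p}`, calibration says that restricting to
`y = 1` scales the mass of each level set by `p`. Hence `E[g(h); y = 1] = E[h · g(h)]` for every
`g`, and `g(p) = 1 - p` gives `E[1 - h; y = 1] = E[h] - E[h²]`; dividing by `μ = P[y = 1]` is the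
claim.
-/

section

variable {Ω : Type*} [Fintype Ω]

theorem sum_indicator_mul_comp_eq_sum_Pr (w h : Ω → ℝ) (g : ℝ → ℝ) (S : Set Ω) :
    ∑ ω, S.indicator (fun ω => w ω * g (h ω)) ω
      = ∑ p ∈ univ.image h, g p * Pr w {ω | h ω = p ∧ ω ∈ S} := by
  classical
  rw [sum_indicator_eq_sum_filter,
    ← sum_fiberwise_of_maps_to (g := h) (t := univ.image h)
      fun ω _ => mem_image_of_mem h (mem_univ ω)]
  refine sum_congr rfl fun p _ => ?_
  rw [Pr, sum_indicator_eq_sum_filter, mul_sum, filter_filter]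
  refine sum_congr (by ext; simp [and_comm]) fun ω hω => ?_
  rw [(mem_filter.mp hω).2.1, mul_comm]

theorem Ex_comp_eq_sum_Pr (w h : Ω → ℝ) (f : ℝ → ℝ) :
    Ex w (fun ω => f (h ω)) = ∑ p ∈ univ.image h, f p * Pr w {ω | h ω = p} := by
  simpa [Ex] using sum_indicator_mul_comp_eq_sum_Pr w h f univ

theorem Calibrated.sum_indicator_mul_comp_eq_Ex {w : Ω → ℝ} {y : Ω → Bool} {h : Ω → ℝ}
    (hcal : Calibrated w y h) (g : ℝ → ℝ) :
    ∑ ω, {ω | y ω = true}.indicator (fun ω => w ω * g (h ω)) ω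
      = Ex w (fun ω => h ω * g (h ω)) := by
  rw [sum_indicator_mul_comp_eq_sum_Pr, Ex_comp_eq_sum_Pr w h (fun p => p * g p)]
  refine sum_congr rfl fun p _ => ?_
  simp only [mem_ofPred_eq, hcal p]
  ring

end

theorem fn_of_calibrated_general {Ω : Type*} [Fintype Ω]
    (w : Ω → ℝ) (y : Ω → Bool) (h : Ω → ℝ) (μ : ℝ)
    (hμ : μ = Pr w {ω | y ω = true})
    (hcal : Calibrated w y h) :
    FN w y h = (Ex w h - Ex w (fun ω => h ω ^ 2)) / μ := by
  have hnum : Ex w (fun ω => h ω * (1 - h ω)) = Ex w h - Ex w (fun ω => h ω ^ 2) := by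
    simp only [Ex, ← sum_sub_distrib]
    exact sum_congr rfl fun ω _ => by ring
  rw [FN, condEx, ← hμ, ← hnum, ← hcal.sum_indicator_mul_comp_eq_Ex (fun p => 1 - p)]

/-- generalized false-negative rate of a calibrated classifier. -/
theorem fn_of_calibrated {Ω : Type*} [Fintype Ω]
    (w : Ω → ℝ) (y : Ω → Bool) (h : Ω → ℝ) (μ : ℝ)
    (hw : IsDistrib w) (hh : ∀ ω, 0 ≤ h ω ∧ h ω ≤ 1)
    (hμ : μ = Pr w {ω | y ω = true}) (hμ0 : 0 < μ) (hμ1 : μ < 1)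
    (hcal : Calibrated w y h) :
    FN w y h = (Ex w h - Ex w (fun ω => h ω ^ 2)) / μ :=
  fn_of_calibrated_general w y h μ hμ hcal
end

section
/- If a classifier h has calibration gap at most δ on group G with base rate μ ∈ (0,1), then its generalized false-positive rate is within δ/(1−μ) of its calibrated value: |FP(h) − (E[h(x)] − E[h(x)²])/(1−μ)| ≤ δ/(1−μ). -/
open Finset Set

/-- approximate calibration bounds the false-positive rate. -/
theorem fp_approx_calibrated {Ω : Type*} [Fintype Ω]
    (w : Ω → ℝ) (y : Ω → Bool) (h : Ω → ℝ) (μ δ : ℝ)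
    (hw : IsDistrib w) (hh : ∀ ω, 0 ≤ h ω ∧ h ω ≤ 1)
    (hμ : μ = Pr w {ω | y ω = true}) (hμ0 : 0 < μ) (hμ1 : μ < 1)
    (hδ : calibGap w y h ≤ δ) :
    |FP w y h - (Ex w h - Ex w (fun ω => h ω ^ 2)) / (1 - μ)| ≤ δ / (1 - μ) := by
  classical
  obtain ⟨hw0, hw1⟩ := hw
  have h1μ : (0:ℝ) < 1 - μ := by linarith
  have hPr : ∀ S : Set Ω, Pr w S = ∑ ω, if ω ∈ S then w ω else 0 := by
    intro S
    rw [Pr]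
    exact Finset.sum_congr rfl fun ω _ => by simp [Set.indicator_apply]
  have hfiber : ∀ F : Ω → ℝ, ∑ ω, F ω
      = ∑ p ∈ Finset.image h Finset.univ,
          ∑ ω ∈ Finset.univ.filter (fun ω => h ω = p), F ω := by
    intro F
    exact (Finset.sum_fiberwise_of_maps_to
      (fun x _ => Finset.mem_image_of_mem h (Finset.mem_univ x)) F).symm
  set A := ∑ ω, if y ω = false then w ω * h ω else 0 with hAdef
  set B := ∑ ω, if y ω = true then w ω * h ω else 0 with hBdef
  have hPrfalse : Pr w {ω | y ω = false} = 1 - μ := by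
    have hsum : Pr w {ω | y ω = true} + Pr w {ω | y ω = false} = 1 := by
      rw [hPr, hPr, ← Finset.sum_add_distrib, ← hw1]
      refine Finset.sum_congr rfl fun ω _ => ?_
      cases hy : y ω <;> simp [hy]
    rw [hμ] at *
    linarith
  have hB : B = ∑ p ∈ Finset.image h Finset.univ,
      p * Pr w {ω | h ω = p ∧ y ω = true} := by
    rw [hBdef, hfiber (fun ω => if y ω = true then w ω * h ω else 0)]
    refine Finset.sum_congr rfl fun p hp => ?_
    rw [hPr, Finset.mul_sum, Finset.sum_filter]
    refine Finset.sum_congr rfl fun ω _ => ?_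
    by_cases h1 : h ω = p <;> by_cases h2 : y ω = true <;>
      simp [h1, h2, Set.mem_setOf_eq, mul_comm]
  have hE2 : Ex w (fun ω => h ω ^ 2)
      = ∑ p ∈ Finset.image h Finset.univ, p * (p * Pr w {ω | h ω = p}) := by
    rw [Ex, hfiber (fun ω => w ω * h ω ^ 2)]
    refine Finset.sum_congr rfl fun p hp => ?_
    rw [hPr, Finset.mul_sum, Finset.mul_sum, Finset.sum_filter]
    refine Finset.sum_congr rfl fun ω _ => ?_
    by_cases h1 : h ω = p
    · simp only [h1, Set.mem_setOf_eq, if_true]; ring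
    · simp [h1, Set.mem_setOf_eq]
  have hsplit : A + B = Ex w h := by
    rw [hAdef, hBdef, Ex, ← Finset.sum_add_distrib]
    refine Finset.sum_congr rfl fun ω _ => ?_
    cases hy : y ω <;> simp [hy]
  have hFPnum : FP w y h = A / (1 - μ) := by
    rw [FP, condEx, hPrfalse]
    congr 1
    rw [hAdef]
    refine Finset.sum_congr rfl fun ω _ => ?_
    cases hy : y ω <;> simp [Set.indicator_apply, hy]
  have key : |A - (Ex w h - Ex w (fun ω => h ω ^ 2))| ≤ δ := by
    have hA : A - (Ex w h - Ex w (fun ω => h ω ^ 2))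
        = ∑ p ∈ Finset.image h Finset.univ,
            (p * (p * Pr w {ω | h ω = p}) - p * Pr w {ω | h ω = p ∧ y ω = true}) := by
      rw [Finset.sum_sub_distrib, ← hE2, ← hB, ← hsplit]; ring
    rw [hA]
    calc |∑ p ∈ Finset.image h Finset.univ,
            (p * (p * Pr w {ω | h ω = p}) - p * Pr w {ω | h ω = p ∧ y ω = true})|
        ≤ ∑ p ∈ Finset.image h Finset.univ,
            |p * (p * Pr w {ω | h ω = p}) - p * Pr w {ω | h ω = p ∧ y ω = true}| :=
          Finset.abs_sum_le_sum_abs _ _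
      _ ≤ ∑ p ∈ Finset.image h Finset.univ,
            |Pr w {ω | h ω = p ∧ y ω = true} - p * Pr w {ω | h ω = p}| := by
          refine Finset.sum_le_sum fun p hp => ?_
          obtain ⟨ω₀, -, rfl⟩ := Finset.mem_image.mp hp
          obtain ⟨hp0, hp1⟩ := hh ω₀
          set q := h ω₀
          have e : q * (q * Pr w {ω | h ω = q})
              - q * Pr w {ω | h ω = q ∧ y ω = true}
              = -(q * (Pr w {ω | h ω = q ∧ y ω = true}
                  - q * Pr w {ω | h ω = q})) := by ring
          rw [e, abs_neg, abs_mul]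
          calc |q| * |Pr w {ω | h ω = q ∧ y ω = true} - q * Pr w {ω | h ω = q}|
              ≤ 1 * |Pr w {ω | h ω = q ∧ y ω = true} - q * Pr w {ω | h ω = q}| := by
                apply mul_le_mul_of_nonneg_right _ (abs_nonneg _)
                rw [abs_of_nonneg hp0]; exact hp1
            _ = _ := one_mul _
      _ = calibGap w y h := rfl
      _ ≤ δ := hδ
  rw [hFPnum, div_sub_div_same, abs_div, abs_of_pos h1μ]
  exact div_le_div_of_nonneg_right key h1μ.le
end

section
/- If a classifier h has calibration gap at most δ on group G with base rate μ ∈ (0,1), then its generalized false-negative rate is within δ/μ of its calibrated value: |FN(h) − (E[h(x)] − E[h(x)²])/μ| ≤ δ/μ. -/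
open Finset Set

/-- approximate calibration bounds the false-negative rate. -/
theorem fn_approx_calibrated {Ω : Type*} [Fintype Ω]
    (w : Ω → ℝ) (y : Ω → Bool) (h : Ω → ℝ) (μ δ : ℝ)
    (hw : IsDistrib w) (hh : ∀ ω, 0 ≤ h ω ∧ h ω ≤ 1)
    (hμ : μ = Pr w {ω | y ω = true}) (hμ0 : 0 < μ) (hμ1 : μ < 1)
    (hδ : calibGap w y h ≤ δ) :
    |FN w y h - (Ex w h - Ex w (fun ω => h ω ^ 2)) / μ| ≤ δ / μ := by
  classical
  set g : Ω → ℝ := fun ω => w ω * (1 - h ω) * ((if y ω = true then (1:ℝ) else 0) - h ω)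
    with hg
  have hPr : ∀ S : Set Ω, Pr w S = ∑ ω ∈ Finset.univ.filter (· ∈ S), w ω := by
    intro S
    rw [Pr, Finset.sum_indicator_eq_sum_filter]
  -- Step 1: numerator identity
  have hA : FN w y h - (Ex w h - Ex w (fun ω => h ω ^ 2)) / μ = (∑ ω, g ω) / μ := by
    rw [FN, condEx, ← hμ, div_sub_div_same]
    congr 1
    rw [Ex, Ex, ← Finset.sum_sub_distrib, ← Finset.sum_sub_distrib]
    apply Finset.sum_congr rfl
    intro ω _
    simp only [Set.indicator, Set.mem_setOf_eq, hg]
    by_cases hy : y ω = true <;> simp [hy] <;> ring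
  rw [hA]
  -- Step 2: fiberwise decomposition
  have hfib : ∑ ω, g ω = ∑ p ∈ Finset.image h Finset.univ,
      (1 - p) * (Pr w {ω | h ω = p ∧ y ω = true} - p * Pr w {ω | h ω = p}) := by
    rw [← Finset.sum_fiberwise_of_maps_to (g := h) (t := Finset.image h Finset.univ)
      (fun x _ => Finset.mem_image_of_mem h (Finset.mem_univ x))]
    apply Finset.sum_congr rfl
    intro p _
    rw [hPr, hPr]
    simp only [Set.mem_setOf_eq]
    rw [Finset.sum_filter, Finset.sum_filter, Finset.sum_filter]
    simp only [mul_sub, Finset.mul_sum]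
    rw [← Finset.sum_sub_distrib]
    apply Finset.sum_congr rfl
    intro ω _
    by_cases hp : h ω = p
    · by_cases hy : y ω = true <;> simp [hg, hp, hy] <;> ring
    · simp [hg, hp]
  rw [hfib, abs_div, abs_of_pos hμ0]
  gcongr
  calc |∑ p ∈ Finset.image h Finset.univ,
        (1 - p) * (Pr w {ω | h ω = p ∧ y ω = true} - p * Pr w {ω | h ω = p})|
      ≤ ∑ p ∈ Finset.image h Finset.univ,
        |(1 - p) * (Pr w {ω | h ω = p ∧ y ω = true} - p * Pr w {ω | h ω = p})| :=
        Finset.abs_sum_le_sum_abs _ _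
    _ ≤ calibGap w y h := by
        rw [calibGap]
        apply Finset.sum_le_sum
        intro p hp
        obtain ⟨ω, _, rfl⟩ := Finset.mem_image.mp hp
        rw [abs_mul]
        have h01 := hh ω
        calc |1 - h ω| * _ ≤ 1 * _ := by
              apply mul_le_mul_of_nonneg_right _ (abs_nonneg _)
              rw [abs_of_nonneg (by linarith [h01.2])]
              linarith [h01.1]
          _ = _ := one_mul _
    _ ≤ δ := hδ
end

section
/- If a classifier h on group G with base rate μ ∈ (0,1) has calibration gap at most δ, then |μ·FN(h) − (1−μ)·FP(h)| ≤ 2δ. That is, approximately calibrated classifiers lie within distance 2δ of the calibration line in the (FP, FN) plane. -/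
open Finset Set

/-- approximately calibrated classifiers lie within `2δ` of the calibration line. -/
theorem approx_calibrated_near_line {Ω : Type*} [Fintype Ω]
    (w : Ω → ℝ) (y : Ω → Bool) (h : Ω → ℝ) (μ δ : ℝ)
    (hw : IsDistrib w) (hh : ∀ ω, 0 ≤ h ω ∧ h ω ≤ 1)
    (hμ : μ = Pr w {ω | y ω = true}) (hμ0 : 0 < μ) (hμ1 : μ < 1)
    (hδ : calibGap w y h ≤ δ) :
    |μ * FN w y h - (1 - μ) * FP w y h| ≤ 2 * δ := by
  classical
  obtain ⟨hw0, hw1⟩ := hw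
  have hPrA : Pr w {ω | y ω = true} = ∑ ω, if y ω = true then w ω else 0 := by
    simp [Pr, Set.indicator_apply]
  have hsplit : (∑ ω, if y ω = true then w ω else 0)
      + (∑ ω, if y ω = false then w ω else 0) = 1 := by
    rw [← Finset.sum_add_distrib, ← hw1]
    apply Finset.sum_congr rfl
    intro ω _
    cases hy : y ω <;> simp
  have hPrB : Pr w {ω | y ω = false} = 1 - μ := by
    have : Pr w {ω | y ω = false} = ∑ ω, if y ω = false then w ω else 0 := by
      simp [Pr, Set.indicator_apply]
    rw [this, hμ, hPrA]; linarith
  have hμne : μ ≠ 0 := ne_of_gt hμ0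
  have h1μne : (1 : ℝ) - μ ≠ 0 := by linarith
  -- μ * FN = ∑ over y=true of w * (1 - h)
  have hFN : μ * FN w y h = ∑ ω, if y ω = true then w ω * (1 - h ω) else 0 := by
    rw [FN, condEx, ← hμ]
    field_simp
    apply Finset.sum_congr rfl
    intro ω _
    simp [Set.indicator_apply]
  have hFP : (1 - μ) * FP w y h = ∑ ω, if y ω = false then w ω * h ω else 0 := by
    rw [FP, condEx, hPrB]
    field_simp
    apply Finset.sum_congr rfl
    intro ω _
    simp [Set.indicator_apply]
  have key : μ * FN w y h - (1 - μ) * FP w y h = μ - ∑ ω, w ω * h ω := by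
    rw [hFN, hFP]
    have e1 : (∑ ω, if y ω = true then w ω * (1 - h ω) else 0)
        = (∑ ω, if y ω = true then w ω else 0) - ∑ ω, if y ω = true then w ω * h ω else 0 := by
      rw [← Finset.sum_sub_distrib]
      apply Finset.sum_congr rfl
      intro ω _
      cases hy : y ω <;> simp <;> ring
    have e2 : (∑ ω, if y ω = true then w ω * h ω else 0)
        + (∑ ω, if y ω = false then w ω * h ω else 0) = ∑ ω, w ω * h ω := by
      rw [← Finset.sum_add_distrib]
      apply Finset.sum_congr rfl
      intro ω _
      cases hy : y ω <;> simp
    rw [e1, hμ, hPrA]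
    linarith
  -- fiberwise decompositions
  have fib1 : (∑ p ∈ Finset.image h Finset.univ, Pr w {ω | h ω = p ∧ y ω = true})
      = ∑ ω, if y ω = true then w ω else 0 := by
    rw [← Finset.sum_fiberwise_of_maps_to (g := h) (t := Finset.image h Finset.univ)
      (fun ω _ => Finset.mem_image_of_mem h (Finset.mem_univ ω))
      (fun ω => if y ω = true then w ω else 0)]
    apply Finset.sum_congr rfl
    intro p _
    rw [Pr, Finset.sum_filter]
    apply Finset.sum_congr rfl
    intro ω _
    simp only [Set.indicator_apply, Set.mem_setOf_eq]
    by_cases hp : h ω = p <;> by_cases hy : y ω = true <;> simp [hp, hy]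
  have fib2 : (∑ p ∈ Finset.image h Finset.univ, p * Pr w {ω | h ω = p})
      = ∑ ω, w ω * h ω := by
    rw [← Finset.sum_fiberwise_of_maps_to (g := h) (t := Finset.image h Finset.univ)
      (fun ω _ => Finset.mem_image_of_mem h (Finset.mem_univ ω))
      (fun ω => w ω * h ω)]
    apply Finset.sum_congr rfl
    intro p _
    rw [Pr, Finset.mul_sum, Finset.sum_filter]
    apply Finset.sum_congr rfl
    intro ω _
    simp only [Set.indicator_apply, Set.mem_setOf_eq]
    by_cases hp : h ω = p <;> simp [hp] <;> ring
  have keydiff : μ - ∑ ω, w ω * h ω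
      = ∑ p ∈ Finset.image h Finset.univ,
        (Pr w {ω | h ω = p ∧ y ω = true} - p * Pr w {ω | h ω = p}) := by
    rw [Finset.sum_sub_distrib, fib1, fib2, hμ, hPrA]
  have habs : |μ * FN w y h - (1 - μ) * FP w y h| ≤ calibGap w y h := by
    rw [key, keydiff, calibGap]
    exact Finset.abs_sum_le_sum_abs _ _
  have hgap0 : 0 ≤ calibGap w y h := Finset.sum_nonneg fun p _ => abs_nonneg _
  linarith
end

section
/- For a perfectly calibrated classifier h on group G with base rate μ ∈ (0,1) and cost g(h) = a·FP(h) + b·FN(h) with a,b ≥ 0, the cost equals (a/(1−μ) + b/μ)·(μ − E[h(x)²]). -/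
open Finset Set

/-- cost of a calibrated classifier. -/
theorem cost_of_calibrated {Ω : Type*} [Fintype Ω]
    (w : Ω → ℝ) (y : Ω → Bool) (h : Ω → ℝ) (μ a b : ℝ)
    (hw : IsDistrib w) (hh : ∀ ω, 0 ≤ h ω ∧ h ω ≤ 1)
    (hμ : μ = Pr w {ω | y ω = true}) (hμ0 : 0 < μ) (hμ1 : μ < 1)
    (ha : 0 ≤ a) (hb : 0 ≤ b)
    (hcal : Calibrated w y h) :
    a * FP w y h + b * FN w y h
      = (a / (1 - μ) + b / μ) * (μ - Ex w (fun ω => h ω ^ 2)) := by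
  classical
  have fib : ∀ f : Ω → ℝ,
      ∑ p ∈ Finset.image h Finset.univ,
        ∑ ω ∈ Finset.univ.filter (fun ω => h ω = p), f ω = ∑ ω, f ω := fun f =>
    Finset.sum_fiberwise_of_maps_to (fun x _ => Finset.mem_image_of_mem h (Finset.mem_univ x)) f
  have Pr_eq : ∀ S : Set Ω, ∀ _ : DecidablePred (· ∈ S),
      Pr w S = ∑ ω ∈ Finset.univ.filter (fun ω => ω ∈ S), w ω := by
    intro S inst
    unfold Pr
    rw [Finset.sum_filter]
    exact Finset.sum_congr rfl fun ω _ => by simp [Set.indicator_apply]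
  have hcal' : ∀ p : ℝ,
      ∑ ω ∈ Finset.univ.filter (fun ω => h ω = p ∧ y ω = true), w ω
        = p * ∑ ω ∈ Finset.univ.filter (fun ω => h ω = p), w ω := by
    intro p
    have := hcal p
    rw [Pr_eq _ (by intro ω; infer_instance), Pr_eq _ (by intro ω; infer_instance)] at this
    simpa using this
  -- key identity 1 : ∑ (if y then w*h) = ∑ w * h^2
  have key1 : (∑ ω, if y ω = true then w ω * h ω else 0) = ∑ ω, w ω * h ω ^ 2 := by
    rw [← fib (fun ω => if y ω = true then w ω * h ω else 0), ← fib (fun ω => w ω * h ω ^ 2)]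
    refine Finset.sum_congr rfl fun p _ => ?_
    have l1 : ∑ ω ∈ Finset.univ.filter (fun ω => h ω = p), (if y ω = true then w ω * h ω else 0)
        = p * ∑ ω ∈ Finset.univ.filter (fun ω => h ω = p ∧ y ω = true), w ω := by
      rw [Finset.mul_sum, ← Finset.filter_filter, Finset.sum_filter (fun ω => y ω = true)]
      refine Finset.sum_congr rfl fun ω hω => ?_
      have hp : h ω = p := (Finset.mem_filter.mp hω).2
      by_cases hy : y ω = true <;> simp [hy, hp, mul_comm]
    have l2 : ∑ ω ∈ Finset.univ.filter (fun ω => h ω = p), w ω * h ω ^ 2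
        = p * (p * ∑ ω ∈ Finset.univ.filter (fun ω => h ω = p), w ω) := by
      rw [Finset.mul_sum, Finset.mul_sum]
      refine Finset.sum_congr rfl fun ω hω => ?_
      have hp : h ω = p := (Finset.mem_filter.mp hω).2
      rw [hp]; ring
    rw [l1, hcal', l2]
  -- key identity 2 : ∑ (if y then w) = ∑ w * h
  have key0 : (∑ ω, if y ω = true then w ω else 0) = ∑ ω, w ω * h ω := by
    rw [← fib (fun ω => if y ω = true then w ω else 0), ← fib (fun ω => w ω * h ω)]
    refine Finset.sum_congr rfl fun p _ => ?_
    have l1 : ∑ ω ∈ Finset.univ.filter (fun ω => h ω = p), (if y ω = true then w ω else 0)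
        = ∑ ω ∈ Finset.univ.filter (fun ω => h ω = p ∧ y ω = true), w ω := by
      rw [← Finset.filter_filter, Finset.sum_filter (fun ω => y ω = true)]
    have l2 : ∑ ω ∈ Finset.univ.filter (fun ω => h ω = p), w ω * h ω
        = p * ∑ ω ∈ Finset.univ.filter (fun ω => h ω = p), w ω := by
      rw [Finset.mul_sum]
      refine Finset.sum_congr rfl fun ω hω => ?_
      have hp : h ω = p := (Finset.mem_filter.mp hω).2
      rw [hp]; ring
    rw [l1, hcal', l2]
  -- μ as a sum
  have hμ' : μ = ∑ ω, if y ω = true then w ω else 0 := by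
    rw [hμ, Pr_eq _ (by intro ω; infer_instance), Finset.sum_filter]
    exact Finset.sum_congr rfl fun ω _ => by simp
  have hμh : μ = ∑ ω, w ω * h ω := by rw [hμ', key0]
  set E2 : ℝ := ∑ ω, w ω * h ω ^ 2 with hE2
  -- Pr of y = false
  have hsplit : (∑ ω, if y ω = true then w ω else 0) + (∑ ω, if y ω = false then w ω else 0)
      = ∑ ω, w ω := by
    rw [← Finset.sum_add_distrib]
    refine Finset.sum_congr rfl fun ω _ => ?_
    by_cases hy : y ω = true <;> simp [hy]
  have hPrF : Pr w {ω | y ω = false} = 1 - μ := by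
    rw [Pr_eq _ (by intro ω; infer_instance), Finset.sum_filter]
    have : (∑ ω, if y ω ∈ ({false} : Set Bool) then w ω else 0)
        = ∑ ω, if y ω = false then w ω else 0 := by
      refine Finset.sum_congr rfl fun ω _ => by simp
    simp only [Set.mem_setOf_eq]
    have := hsplit
    rw [hw.2] at this
    rw [hμ']; linarith
  have hPrT : Pr w {ω | y ω = true} = μ := hμ.symm
  -- FP
  have hFPnum : (∑ ω, ({ω | y ω = false} : Set Ω).indicator (fun ω' => w ω' * h ω') ω)
      = μ - E2 := by
    have : (∑ ω, ({ω | y ω = false} : Set Ω).indicator (fun ω' => w ω' * h ω') ω)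
        = ∑ ω, if y ω = false then w ω * h ω else 0 := by
      refine Finset.sum_congr rfl fun ω _ => by simp [Set.indicator_apply]
    rw [this]
    have hsplit2 : (∑ ω, if y ω = true then w ω * h ω else 0)
        + (∑ ω, if y ω = false then w ω * h ω else 0) = ∑ ω, w ω * h ω := by
      rw [← Finset.sum_add_distrib]
      refine Finset.sum_congr rfl fun ω _ => ?_
      by_cases hy : y ω = true <;> simp [hy]
    rw [key1] at hsplit2
    rw [← hμh] at hsplit2
    linarith
  have hFP : FP w y h = (μ - E2) / (1 - μ) := by
    unfold FP condEx
    rw [hFPnum, hPrF]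
  -- FN
  have hFNnum : (∑ ω, ({ω | y ω = true} : Set Ω).indicator (fun ω' => w ω' * (1 - h ω')) ω)
      = μ - E2 := by
    have : (∑ ω, ({ω | y ω = true} : Set Ω).indicator (fun ω' => w ω' * (1 - h ω')) ω)
        = ∑ ω, ((if y ω = true then w ω else 0) - (if y ω = true then w ω * h ω else 0)) := by
      refine Finset.sum_congr rfl fun ω _ => ?_
      by_cases hy : y ω = true <;> simp [Set.indicator_apply, hy] <;> ring
    rw [this, Finset.sum_sub_distrib, key1, ← hμ']
  have hFN : FN w y h = (μ - E2) / μ := by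
    unfold FN condEx
    rw [hFNnum, hPrT]
  have hEx : Ex w (fun ω => h ω ^ 2) = E2 := rfl
  rw [hFP, hFN, hEx]
  ring
end

section
/- Among all perfectly calibrated classifiers for group G with base rate μ ∈ (0,1), the trivial classifier h^μ that outputs the constant μ maximizes any cost g(h) = a·FP(h) + b·FN(h) with a,b ≥ 0: for every perfectly calibrated h, g(h) ≤ g(h^μ). -/
open Finset Set

section Aux
open Finset

private lemma my_fiber_sum {Ω : Type*} [Fintype Ω] (h : Ω → ℝ) (F : Ω → ℝ) :
    ∑ ω, F ω = ∑ p ∈ Finset.image h Finset.univ,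
      ∑ ω ∈ Finset.univ.filter (fun ω => h ω = p), F ω := by
  classical
  exact (Finset.sum_fiberwise_of_maps_to (fun x _ => Finset.mem_image_of_mem h (Finset.mem_univ x)) F).symm

end Aux

/-- the trivial classifier maximizes the cost among calibrated classifiers. -/
theorem trivial_classifier_maximizes_cost {Ω : Type*} [Fintype Ω]
    (w : Ω → ℝ) (y : Ω → Bool) (h : Ω → ℝ) (μ a b : ℝ)
    (hw : IsDistrib w) (hh : ∀ ω, 0 ≤ h ω ∧ h ω ≤ 1)
    (hμ : μ = Pr w {ω | y ω = true}) (hμ0 : 0 < μ) (hμ1 : μ < 1)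
    (ha : 0 ≤ a) (hb : 0 ≤ b)
    (hcal : Calibrated w y h) :
    a * FP w y h + b * FN w y h
      ≤ a * FP w y (fun _ => μ) + b * FN w y (fun _ => μ) := by
    classical
  obtain ⟨hw0, hw1⟩ := hw
  have pr_eq : ∀ S : Set Ω, ∀ _ : DecidablePred (· ∈ S),
      Pr w S = ∑ ω ∈ Finset.univ.filter (fun ω => ω ∈ S), w ω := by
    intro S inst
    unfold Pr
    rw [Finset.sum_filter]
    refine Finset.sum_congr rfl fun ω _ => ?_
    simp [Set.indicator_apply]
  -- μ as filtered sum
  have hμs : μ = ∑ ω ∈ Finset.univ.filter (fun ω => y ω = true), w ω := by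
    rw [hμ, pr_eq _ (by infer_instance)]
    apply Finset.sum_congr _ (fun _ _ => rfl)
    apply Finset.filter_congr; intro ω _; simp [Set.mem_setOf_eq]
  -- P[y = false] = 1 - μ
  have hμ0s : (∑ ω ∈ Finset.univ.filter (fun ω => y ω = false), w ω) = 1 - μ := by
    have := Finset.sum_filter_add_sum_filter_not Finset.univ (fun ω => y ω = true) w
    rw [hw1] at this
    have hfeq : Finset.univ.filter (fun ω => ¬ y ω = true)
        = Finset.univ.filter (fun ω => y ω = false) := by
      apply Finset.filter_congr; intro ω _; simp
    rw [hfeq] at this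
    rw [hμs]; linarith
  set Q := ∑ ω, w ω * (h ω)^2 with hQdef
  -- calibration in filtered form
  have hcal' : ∀ p : ℝ,
      (∑ ω ∈ Finset.univ.filter (fun ω => h ω = p ∧ y ω = true), w ω)
        = p * ∑ ω ∈ Finset.univ.filter (fun ω => h ω = p), w ω := by
    intro p
    have := hcal p
    rw [pr_eq _ (by infer_instance), pr_eq _ (by infer_instance)] at this
    have e1 : Finset.univ.filter (fun ω => (ω : Ω) ∈ {ω | h ω = p ∧ y ω = true})
        = Finset.univ.filter (fun ω => h ω = p ∧ y ω = true) :=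
      Finset.filter_congr (fun ω _ => by simp [Set.mem_setOf_eq])
    have e2 : Finset.univ.filter (fun ω => (ω : Ω) ∈ {ω | h ω = p})
        = Finset.univ.filter (fun ω => h ω = p) :=
      Finset.filter_congr (fun ω _ => by simp [Set.mem_setOf_eq])
    rw [e1, e2] at this
    exact this
  -- key identity 1 : ∑_{y=true} w h = Q
  have key1 : (∑ ω ∈ Finset.univ.filter (fun ω => y ω = true), w ω * h ω) = Q := by
    have lhs_eq : (∑ ω ∈ Finset.univ.filter (fun ω => y ω = true), w ω * h ω)
        = ∑ ω, (if y ω = true then w ω * h ω else 0) := by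
      rw [Finset.sum_filter]
    rw [lhs_eq, my_fiber_sum h (fun ω => if y ω = true then w ω * h ω else 0),
        hQdef, my_fiber_sum h (fun ω => w ω * (h ω)^2)]
    refine Finset.sum_congr rfl fun p _ => ?_
    have l1 : (∑ ω ∈ Finset.univ.filter (fun ω => h ω = p),
        (if y ω = true then w ω * h ω else 0))
        = p * ∑ ω ∈ Finset.univ.filter (fun ω => h ω = p ∧ y ω = true), w ω := by
      rw [Finset.mul_sum, Finset.sum_filter, Finset.sum_filter]
      refine Finset.sum_congr rfl fun ω _ => ?_
      by_cases hp : h ω = p <;> by_cases hy : y ω = true <;> simp [hp, hy] <;> ring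
    have l2 : (∑ ω ∈ Finset.univ.filter (fun ω => h ω = p), w ω * (h ω)^2)
        = p * (p * ∑ ω ∈ Finset.univ.filter (fun ω => h ω = p), w ω) := by
      rw [Finset.mul_sum, Finset.mul_sum]
      refine Finset.sum_congr rfl fun ω hω => ?_
      rw [Finset.mem_filter] at hω
      rw [hω.2]; ring
    rw [l1, hcal' p, l2]
  -- key identity 2 : E[h] = μ
  have key2 : (∑ ω, w ω * h ω) = μ := by
    have rhs : μ = ∑ ω, (if y ω = true then w ω else 0) := by
      rw [hμs, Finset.sum_filter]
    rw [my_fiber_sum h (fun ω => w ω * h ω), rhs,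
        my_fiber_sum h (fun ω => if y ω = true then w ω else 0)]
    refine Finset.sum_congr rfl fun p _ => ?_
    · have l2 : (∑ ω ∈ Finset.univ.filter (fun ω => h ω = p), w ω * h ω)
          = p * ∑ ω ∈ Finset.univ.filter (fun ω => h ω = p), w ω := by
        rw [Finset.mul_sum]
        refine Finset.sum_congr rfl fun ω hω => ?_
        rw [Finset.mem_filter] at hω
        rw [hω.2]; ring
      have l1 : (∑ ω ∈ Finset.univ.filter (fun ω => h ω = p),
          (if y ω = true then w ω else 0))
          = ∑ ω ∈ Finset.univ.filter (fun ω => h ω = p ∧ y ω = true), w ω := by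
        rw [Finset.sum_filter, Finset.sum_filter]
        refine Finset.sum_congr rfl fun ω _ => ?_
        by_cases hp : h ω = p <;> by_cases hy : y ω = true <;> simp [hp, hy]
      rw [l2, l1, hcal' p]
  -- Cauchy–Schwarz: μ² ≤ Q
  have hQge : μ^2 ≤ Q := by
    have cs := Finset.sum_mul_sq_le_sq_mul_sq Finset.univ
      (fun ω => Real.sqrt (w ω)) (fun ω => Real.sqrt (w ω) * h ω)
    have e1 : (∑ ω, Real.sqrt (w ω) * (Real.sqrt (w ω) * h ω)) = μ := by
      rw [← key2]
      refine Finset.sum_congr rfl fun ω _ => ?_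
      rw [← mul_assoc, Real.mul_self_sqrt (hw0 ω)]
    have e2 : (∑ ω, Real.sqrt (w ω) ^ 2) = 1 := by
      rw [← hw1]
      exact Finset.sum_congr rfl fun ω _ => Real.sq_sqrt (hw0 ω)
    have e3 : (∑ ω, (Real.sqrt (w ω) * h ω) ^ 2) = Q := by
      refine Finset.sum_congr rfl fun ω _ => ?_
      rw [mul_pow, Real.sq_sqrt (hw0 ω)]
    rw [e1, e2, e3, one_mul] at cs
    exact cs
  -- numerators of condEx as filtered sums
  have num_eq : ∀ (f : Ω → ℝ) (S : Set Ω), ∀ _ : DecidablePred (· ∈ S),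
      (∑ ω, S.indicator (fun ω' => w ω' * f ω') ω)
        = ∑ ω ∈ Finset.univ.filter (fun ω => ω ∈ S), w ω * f ω := by
    intro f S inst
    rw [Finset.sum_filter]
    refine Finset.sum_congr rfl fun ω _ => ?_
    simp [Set.indicator_apply]
  have filt_false : ∀ g : Ω → ℝ,
      (∑ ω ∈ Finset.univ.filter (fun ω => (ω : Ω) ∈ {ω | y ω = false}), g ω)
        = ∑ ω ∈ Finset.univ.filter (fun ω => y ω = false), g ω := by
    intro g; apply Finset.sum_congr _ (fun _ _ => rfl)
    apply Finset.filter_congr; intro ω _; simp [Set.mem_setOf_eq]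
  have filt_true : ∀ g : Ω → ℝ,
      (∑ ω ∈ Finset.univ.filter (fun ω => (ω : Ω) ∈ {ω | y ω = true}), g ω)
        = ∑ ω ∈ Finset.univ.filter (fun ω => y ω = true), g ω := by
    intro g; apply Finset.sum_congr _ (fun _ _ => rfl)
    apply Finset.filter_congr; intro ω _; simp [Set.mem_setOf_eq]
  -- Pr of events
  have pr_false : Pr w {ω | y ω = false} = 1 - μ := by
    rw [pr_eq _ (by infer_instance)]
    rw [filt_false w]; exact hμ0s
  have pr_true : Pr w {ω | y ω = true} = μ := hμ.symm
  -- split E[h] over y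
  have split_h : (∑ ω ∈ Finset.univ.filter (fun ω => y ω = false), w ω * h ω) = μ - Q := by
    have := Finset.sum_filter_add_sum_filter_not Finset.univ (fun ω => y ω = true)
      (fun ω => w ω * h ω)
    have hfeq : Finset.univ.filter (fun ω => ¬ y ω = true)
        = Finset.univ.filter (fun ω => y ω = false) := by
      apply Finset.filter_congr; intro ω _; simp
    rw [hfeq, key1, key2] at this
    linarith
  have split_1h : (∑ ω ∈ Finset.univ.filter (fun ω => y ω = true), w ω * (1 - h ω))
      = μ - Q := by
    have : (∑ ω ∈ Finset.univ.filter (fun ω => y ω = true), w ω * (1 - h ω))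
        = (∑ ω ∈ Finset.univ.filter (fun ω => y ω = true), w ω)
          - ∑ ω ∈ Finset.univ.filter (fun ω => y ω = true), w ω * h ω := by
      rw [← Finset.sum_sub_distrib]
      refine Finset.sum_congr rfl fun ω _ => by ring
    rw [this, key1, ← hμs]
  -- compute all four quantities
  have hFP : FP w y h = (μ - Q) / (1 - μ) := by
    unfold FP condEx
    rw [num_eq h _ (by infer_instance), filt_false, split_h, pr_false]
  have hFN : FN w y h = (μ - Q) / μ := by
    unfold FN condEx
    rw [num_eq (fun ω => 1 - h ω) _ (by infer_instance), filt_true, split_1h, pr_true]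
  have hFPt : FP w y (fun _ => μ) = μ := by
    unfold FP condEx
    rw [num_eq (fun _ => μ) _ (by infer_instance), filt_false, pr_false]
    have : (∑ ω ∈ Finset.univ.filter (fun ω => y ω = false), w ω * μ)
        = (1 - μ) * μ := by
      rw [← Finset.sum_mul, hμ0s]
    rw [this, mul_comm, mul_div_assoc, div_self (by linarith : (1:ℝ) - μ ≠ 0), mul_one]
  have hFNt : FN w y (fun _ => μ) = 1 - μ := by
    unfold FN condEx
    rw [num_eq (fun _ => 1 - μ) _ (by infer_instance), filt_true, pr_true]
    have : (∑ ω ∈ Finset.univ.filter (fun ω => y ω = true), w ω * (1 - μ))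
        = μ * (1 - μ) := by
      rw [← Finset.sum_mul, ← hμs]
    rw [this, mul_comm, mul_div_assoc, div_self (by linarith : μ ≠ 0), mul_one]
  rw [hFP, hFN, hFPt, hFNt]
  have h1 : (μ - Q) / (1 - μ) ≤ μ := by
    rw [div_le_iff₀ (by linarith : (0:ℝ) < 1 - μ)]
    nlinarith
  have h2 : (μ - Q) / μ ≤ 1 - μ := by
    rw [div_le_iff₀ hμ0]
    nlinarith
  have := mul_le_mul_of_nonneg_left h1 ha
  have := mul_le_mul_of_nonneg_left h2 hb
  linarith
end

section
/- For any classifier h on group G with base rate μ ∈ (0,1) and calibration gap at most δ, and any cost g(h) = a·FP(h) + b·FN(h) with a,b ≥ 0, the cost deviates from its calibrated formula by at most (a/(1−μ) + b/μ)·δ: |g(h) − (a/(1−μ) + b/μ)·(E[h(x)] − E[h(x)²])| ≤ (a/(1−μ) + b/μ)·δ. -/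
open Finset Set

/-- the cost of an approximately calibrated classifier deviates from its
calibrated value by at most `(a/(1-μ) + b/μ)·δ`. -/
theorem cost_approx_calibrated {Ω : Type*} [Fintype Ω]
    (w : Ω → ℝ) (y : Ω → Bool) (h : Ω → ℝ) (μ a b δ : ℝ)
    (hw : IsDistrib w) (hh : ∀ ω, 0 ≤ h ω ∧ h ω ≤ 1)
    (hμ : μ = Pr w {ω | y ω = true}) (hμ0 : 0 < μ) (hμ1 : μ < 1)
    (ha : 0 ≤ a) (hb : 0 ≤ b)
    (hδ : calibGap w y h ≤ δ) :
    |a * FP w y h + b * FN w y h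
        - (a / (1 - μ) + b / μ) * (Ex w h - Ex w (fun ω => h ω ^ 2))|
      ≤ (a / (1 - μ) + b / μ) * δ := by
  classical
  unfold calibGap at hδ
  set I := Finset.image h Finset.univ with hI
  set ε : ℝ → ℝ := fun p =>
    Pr w {ω | h ω = p ∧ y ω = true} - p * Pr w {ω | h ω = p} with hεdef
  have hδ0 : ∑ p ∈ I, |ε p| ≤ δ := hδ
  have prS : ∀ S : Set Ω, Pr w S = ∑ ω, if ω ∈ S then w ω else 0 := by
    intro S
    refine Finset.sum_congr rfl fun ω _ => ?_
    by_cases hx : ω ∈ S <;> simp [hx]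
  have fib : ∀ g : Ω → ℝ,
      ∑ p ∈ I, ∑ ω ∈ Finset.univ.filter (fun ω => h ω = p), g ω = ∑ ω, g ω := fun g =>
    Finset.sum_fiberwise_of_maps_to (fun x _ => Finset.mem_image_of_mem h (Finset.mem_univ x)) g
  have prh : ∀ p, Pr w {ω | h ω = p}
      = ∑ ω ∈ Finset.univ.filter (fun ω => h ω = p), w ω := by
    intro p
    rw [prS, Finset.sum_filter]
    exact Finset.sum_congr rfl fun ω _ => by by_cases h1 : h ω = p <;> simp [h1]
  have prhy : ∀ p, Pr w {ω | h ω = p ∧ y ω = true}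
      = ∑ ω ∈ Finset.univ.filter (fun ω => h ω = p), (if y ω = true then w ω else 0) := by
    intro p
    rw [prS, Finset.sum_filter]
    refine Finset.sum_congr rfl fun ω _ => ?_
    by_cases h1 : h ω = p <;> by_cases h2 : y ω = true <;> simp [h1, h2]
  set T1 : ℝ := ∑ ω, (if y ω = true then w ω * h ω else 0) with hT1
  set Eh : ℝ := Ex w h with hEh
  set Eh2 : ℝ := Ex w (fun ω => h ω ^ 2) with hEh2
  have hsum1 : ∑ p ∈ I, p * Pr w {ω | h ω = p} = Eh := by
    have step : ∀ p ∈ I, p * Pr w {ω | h ω = p}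
        = ∑ ω ∈ Finset.univ.filter (fun ω => h ω = p), w ω * h ω := by
      intro p _
      rw [prh, Finset.mul_sum]
      refine Finset.sum_congr rfl fun ω hω => ?_
      have hm := (Finset.mem_filter.mp hω).2
      rw [hm]; ring
    rw [Finset.sum_congr rfl step, fib]
    rfl
  have hsum2 : ∑ p ∈ I, p * (p * Pr w {ω | h ω = p}) = Eh2 := by
    have step : ∀ p ∈ I, p * (p * Pr w {ω | h ω = p})
        = ∑ ω ∈ Finset.univ.filter (fun ω => h ω = p), w ω * h ω ^ 2 := by
      intro p _
      rw [prh, Finset.mul_sum, Finset.mul_sum]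
      refine Finset.sum_congr rfl fun ω hω => ?_
      have hm := (Finset.mem_filter.mp hω).2
      rw [hm]; ring
    rw [Finset.sum_congr rfl step, fib]
    rfl
  have hsum3 : ∑ p ∈ I, Pr w {ω | h ω = p ∧ y ω = true} = μ := by
    have step : ∀ p ∈ I, Pr w {ω | h ω = p ∧ y ω = true}
        = ∑ ω ∈ Finset.univ.filter (fun ω => h ω = p), (if y ω = true then w ω else 0) :=
      fun p _ => prhy p
    rw [Finset.sum_congr rfl step, fib, hμ, prS]
    exact Finset.sum_congr rfl fun ω _ => by by_cases h2 : y ω = true <;> simp [h2]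
  have hsum4 : ∑ p ∈ I, p * Pr w {ω | h ω = p ∧ y ω = true} = T1 := by
    have step : ∀ p ∈ I, p * Pr w {ω | h ω = p ∧ y ω = true}
        = ∑ ω ∈ Finset.univ.filter (fun ω => h ω = p),
            (if y ω = true then w ω * h ω else 0) := by
      intro p _
      rw [prhy, Finset.mul_sum]
      refine Finset.sum_congr rfl fun ω hω => ?_
      have hm := (Finset.mem_filter.mp hω).2
      by_cases h2 : y ω = true <;> simp [h2, hm] <;> ring
    rw [Finset.sum_congr rfl step, fib]
  set A : ℝ := ∑ p ∈ I, p * ε p with hAdef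
  set B : ℝ := ∑ p ∈ I, ε p with hBdef
  have hA : A = T1 - Eh2 := by
    have step : ∀ p ∈ I, p * ε p
        = p * Pr w {ω | h ω = p ∧ y ω = true} - p * (p * Pr w {ω | h ω = p}) := by
      intro p _; simp only [hεdef]; ring
    rw [hAdef, Finset.sum_congr rfl step, Finset.sum_sub_distrib, hsum4, hsum2]
  have hB : B = μ - Eh := by
    rw [hBdef, hεdef, Finset.sum_sub_distrib, hsum3, hsum1]
  have hne1 : (1 : ℝ) - μ ≠ 0 := by linarith
  have hne2 : μ ≠ 0 := ne_of_gt hμ0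
  have hsplit : Pr w {ω | y ω = true} + Pr w {ω | y ω = false} = 1 := by
    rw [prS, prS, ← Finset.sum_add_distrib, ← hw.2]
    refine Finset.sum_congr rfl fun ω _ => ?_
    by_cases h2 : y ω = true <;> simp [h2]
  have hPrfalse : Pr w {ω | y ω = false} = 1 - μ := by
    rw [hμ]; linarith
  have hFPnum : (∑ ω, ({ω | y ω = false}).indicator (fun ω' => w ω' * h ω') ω)
      = Eh - T1 := by
    rw [hEh, hT1, Ex, ← Finset.sum_sub_distrib]
    refine Finset.sum_congr rfl fun ω _ => ?_
    by_cases h2 : y ω = true <;> simp [Set.indicator_apply, h2]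
  have hFNnum : (∑ ω, ({ω | y ω = true}).indicator (fun ω' => w ω' * (1 - h ω')) ω)
      = μ - T1 := by
    have hμ' : μ = ∑ ω, (if y ω = true then w ω else 0) := by
      rw [hμ, prS]
      exact Finset.sum_congr rfl fun ω _ => by by_cases h2 : y ω = true <;> simp [h2]
    rw [hμ', hT1, ← Finset.sum_sub_distrib]
    refine Finset.sum_congr rfl fun ω _ => ?_
    by_cases h2 : y ω = true <;> simp [Set.indicator_apply, h2] <;> ring
  have hFP : FP w y h = (Eh - T1) / (1 - μ) := by
    rw [FP, condEx, hFPnum, hPrfalse]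
  have hFN : FN w y h = (μ - T1) / μ := by
    rw [FN, condEx, hFNnum, hμ]
  have e1 : Eh - T1 = (Eh - Eh2) - A := by linarith
  have e2 : μ - T1 = (Eh - Eh2) + (B - A) := by linarith
  have key : a * FP w y h + b * FN w y h - (a / (1 - μ) + b / μ) * (Eh - Eh2)
      = -((a / (1 - μ)) * A) + (b / μ) * (B - A) := by
    rw [hFP, hFN, e1, e2]
    field_simp
    ring
  have hcoef1 : (0:ℝ) ≤ a / (1 - μ) := div_nonneg ha (by linarith)
  have hcoef2 : (0:ℝ) ≤ b / μ := div_nonneg hb (le_of_lt hμ0)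
  have habs_p : ∀ p ∈ I, 0 ≤ p ∧ p ≤ 1 := by
    intro p hp
    obtain ⟨ω, _, rfl⟩ := Finset.mem_image.mp hp
    exact hh ω
  have hAabs : |A| ≤ δ := by
    refine le_trans (Finset.abs_sum_le_sum_abs _ _) (le_trans ?_ hδ0)
    refine Finset.sum_le_sum fun p hp => ?_
    rw [abs_mul]
    have := habs_p p hp
    exact mul_le_of_le_one_left (abs_nonneg _) (abs_le.mpr ⟨by linarith, this.2⟩)
  have hBAabs : |B - A| ≤ δ := by
    have hBA : B - A = ∑ p ∈ I, (1 - p) * ε p := by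
      rw [hBdef, hAdef, ← Finset.sum_sub_distrib]
      refine Finset.sum_congr rfl fun p _ => ?_
      ring
    rw [hBA]
    refine le_trans (Finset.abs_sum_le_sum_abs _ _) (le_trans ?_ hδ0)
    refine Finset.sum_le_sum fun p hp => ?_
    rw [abs_mul]
    have h1 : |1 - p| ≤ 1 := by
      have := habs_p p hp
      exact abs_le.mpr ⟨by linarith, by linarith⟩
    exact mul_le_of_le_one_left (abs_nonneg _) h1
  calc |a * FP w y h + b * FN w y h - (a / (1 - μ) + b / μ) * (Eh - Eh2)|
      = |-((a / (1 - μ)) * A) + (b / μ) * (B - A)| := by rw [key]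
    _ ≤ |(a / (1 - μ)) * A| + |(b / μ) * (B - A)| := by
        refine le_trans (abs_add_le _ _) ?_
        rw [abs_neg]
    _ = (a / (1 - μ)) * |A| + (b / μ) * |B - A| := by
        rw [abs_mul, abs_mul, abs_of_nonneg hcoef1, abs_of_nonneg hcoef2]
    _ ≤ (a / (1 - μ)) * δ + (b / μ) * δ := by gcongr
    _ = (a / (1 - μ) + b / μ) * δ := by ring
end
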